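/- Let F be a 2-form on a star-shaped region U of Minkowski (or Riemannian) space with dF = 0 and δF = j where δj = 0. Then F = δα + hj for some form α ∈ Λ³(U), where h is the cohomotopy operator; moreover δα is the unique coexact part of F, and the constraint d(δα + hj) = 0 holds. -/

import Mathlib

theorem stmt18_general {V : Type*} [AddCommGroup V] [Module ℝ V]
    (d δ h : V →ₗ[ℝ] V) (F j : V)
    (hhomotopy : ∀ x, δ (h x) + h (δ x) = x)
    (hF : d F = 0) (hFj : δ F = j) :
    ∃ α : V, F = δ α + h j ∧ d (δ α + h j) = 0 ∧
      ∀ α' : V, F = δ α' + h j → δ α' = δ α := by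
  have hdecomp : δ (h F) + h j = F := hFj ▸ hhomotopy F
  refine ⟨h F, hdecomp.symm, by rwa [hdecomp], fun α' hα' => ?_⟩
  exact add_right_cancel (hα'.symm.trans hdecomp.symm)

/-- For the Maxwell system `dF = 0`, `δF = j` with conserved current
(`δj = 0`) on a star-shaped region, where the cohomotopy operator satisfies
`δh + hδ = I`, one has `F = δα + hj` for some form `α`; the coexact part `δα` is
unique, and the constraint `d(δα + hj) = 0` holds. -/
theorem stmt18 {V : Type*} [AddCommGroup V] [Module ℝ V]
    (d δ h : V →ₗ[ℝ] V) (F j : V)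
    (hδ2 : ∀ x, δ (δ x) = 0) (hh2 : ∀ x, h (h x) = 0)
    (hhomotopy : ∀ x, δ (h x) + h (δ x) = x)
    (hF : d F = 0) (hFj : δ F = j) (hj : δ j = 0) :
    ∃ α : V, F = δ α + h j ∧ d (δ α + h j) = 0 ∧
      ∀ α' : V, F = δ α' + h j → δ α' = δ α :=
  stmt18_general d δ h F j hhomotopy hF hFj
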